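/- arXiv:1606.07710 — 2 statements merged into one kernel-verified Lean document; each statement's English description precedes it below -/
import Mathlib

section
/- Let (G,≾) be a compatible quasi-ordered abelian group and define g ≼ h iff there exist nonzero integers n, m with 0 ≾ ng ≾ mh. Then the restriction of ≼ to the subgroup G^o of o-type elements is a valuational quasi-order on G^o: it is reflexive and transitive, and it satisfies 0 is strictly maximal (g ≼ 0 → g = 0 for g ∈ G^o), g ≼ −g ≼ g for all g ∈ G^o, and the ultrametric inequality g ≼ h ⇒ g + h ≼ h for g, h ∈ G^o. -/
universe u

variable {G : Type u} [AddCommGroup G]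

/-- `r` is a total quasi-order: reflexive, transitive, any two elements comparable. -/
def TotalQO (r : G → G → Prop) : Prop :=
  (∀ x, r x x) ∧ (∀ x y z, r x y → r y z → r x z) ∧ (∀ x y, r x y ∨ r y x)

/-- Axiom (Q1): `x ∼ 0 → x = 0`. -/
def AxQ1 (r : G → G → Prop) : Prop := ∀ x, r x 0 → r 0 x → x = 0

/-- Axiom (Q2): `x ≾ y ∧ ¬(y ∼ z) → x + z ≾ y + z`. -/
def AxQ2 (r : G → G → Prop) : Prop :=
  ∀ x y z, r x y → ¬(r y z ∧ r z y) → r (x + z) (y + z)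

/-- A compatible quasi-ordered abelian group: a total quasi-order satisfying (Q1) and (Q2). -/
def Compatible (r : G → G → Prop) : Prop := TotalQO r ∧ AxQ1 r ∧ AxQ2 r

/-- `g` is o-type: its `∼`-class is a singleton and `g` does not have order 2. -/
def OType (r : G → G → Prop) (g : G) : Prop :=
  (∀ h, r h g → r g h → h = g) ∧ (g + g = 0 → g = 0)

/-- `g` is v-type: its `∼`-class is not a singleton, or `g + g = 0`. -/
def VType (r : G → G → Prop) (g : G) : Prop :=
  (∃ h, h ≠ g ∧ r h g ∧ r g h) ∨ g + g = 0

/-- The relation `g ≼ h ↔ ∃ n m ≠ 0, 0 ≾ n•g ≾ m•h`. -/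
def Preqo (r : G → G → Prop) (g h : G) : Prop :=
  ∃ n m : ℤ, n ≠ 0 ∧ m ≠ 0 ∧ r 0 (n • g) ∧ r (n • g) (m • h)

/-!
On o-type elements `≾` behaves like a group order. Translation `x ≾ y → x + z ≾ y + z` holds for
o-type `y, z` (Q2 covers `¬ y ∼ z`, and `y ∼ z` forces `y = z`, which is settled by the sign of
`y`); sums of negative elements are negative, so nonzero o-type elements have infinite order and
their multiples are again o-type. For transitivity, `0 ≾ n₁ • f ≾ m₁ • g` and
`0 ≾ n₂ • g ≾ m₂ • h` with `f ≠ 0` make `m₁ • g` and `n₂ • g` positive, so `m₁` and `n₂` have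
the sign of `g`, and scaling the two chains by `|n₂|` and `|m₁|` makes their middle terms agree.
For the ultrametric inequality, `n • (g + h) ≾ (m + n) • h` by translation; if `n • (g + h)` is
negative, `-n` works on both sides because `-(n • g) ≾ 0`.
-/

section

variable {r : G → G → Prop}

local infix:50 " ≾ " => r

local notation:50 x:51 " ∼ " y:51 => r x y ∧ r y x

/- Positivity and negativity of `x` are expressed as `¬ x ≾ 0` and `¬ 0 ≾ x`. -/

theorem Compatible.refl (hc : Compatible r) (x : G) : x ≾ x := hc.1.1 x

theorem Compatible.trans (hc : Compatible r) {x y z : G} (hxy : x ≾ y) (hyz : y ≾ z) : x ≾ z :=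
  hc.1.2.1 x y z hxy hyz

theorem Compatible.total (hc : Compatible r) (x y : G) : x ≾ y ∨ y ≾ x :=
  hc.1.2.2 x y

theorem Compatible.eq_zero (hc : Compatible r) {x : G} (h₁ : x ≾ 0) (h₂ : 0 ≾ x) : x = 0 :=
  hc.2.1 x h₁ h₂

theorem Compatible.add_right (hc : Compatible r) {x y z : G} (hxy : x ≾ y) (hyz : ¬ y ∼ z) :
    x + z ≾ y + z :=
  hc.2.2 x y z hxy hyz

theorem Compatible.le_of_not_ge (hc : Compatible r) {x y : G} (h : ¬ y ≾ x) : x ≾ y :=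
  (hc.total x y).resolve_right h

theorem Compatible.neg_nonneg_of_nonpos (hc : Compatible r) {x : G} (h : x ≾ 0) : 0 ≾ -x := by
  by_cases hx : 0 ∼ -x
  · exact hx.1
  · simpa using hc.add_right h hx

theorem Compatible.neg_pos_of_neg (hc : Compatible r) {x : G} (h : ¬ 0 ≾ x) : ¬ -x ≾ 0 :=
  fun h' => h (by simpa using hc.neg_nonneg_of_nonpos h')

theorem Compatible.equiv_add_right (hc : Compatible r) {x y z : G} (hxy : x ∼ y)
    (hyz : ¬ y ∼ z) : x + z ∼ y + z :=
  ⟨hc.add_right hxy.1 hyz,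
    hc.add_right hxy.2 fun hxz => hyz ⟨hc.trans hxy.2 hxz.1, hc.trans hxz.2 hxy.1⟩⟩

theorem Compatible.trichotomy (hc : Compatible r) (x : G) :
    x = 0 ∨ ¬ x ≾ 0 ∨ ¬ 0 ≾ x := by
  by_cases h₁ : x ≾ 0
  · by_cases h₂ : 0 ≾ x
    · exact Or.inl (hc.eq_zero h₁ h₂)
    · exact Or.inr (Or.inr h₂)
  · exact Or.inr (Or.inl h₁)

theorem Compatible.pos_of_nonneg_of_ne_zero (hc : Compatible r) {x : G} (h : 0 ≾ x)
    (hx : x ≠ 0) : ¬ x ≾ 0 :=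
  fun h' => hx (hc.eq_zero h' h)

theorem Compatible.add_neg (hc : Compatible r) {x y : G} (hx : ¬ 0 ≾ x) (hy : ¬ 0 ≾ y) :
    ¬ 0 ≾ x + y := by
  have hxy : x + y ≾ 0 + y :=
    hc.add_right (hc.le_of_not_ge hx) fun h => hy h.1
  exact fun h => hy (hc.trans h (by simpa using hxy))

theorem Compatible.nsmul_neg (hc : Compatible r) {x : G} (hx : ¬ 0 ≾ x) :
    ∀ {n : ℕ}, n ≠ 0 → ¬ 0 ≾ n • x
  | 1, _ => by simpa using hx
  | n + 2, _ => by
    rw [succ_nsmul]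
    exact hc.add_neg (hc.nsmul_neg hx n.succ_ne_zero) hx

theorem Compatible.not_isOfFinAddOrder_of_neg (hc : Compatible r) {x : G} (hx : ¬ 0 ≾ x) :
    ¬ IsOfFinAddOrder x := by
  rw [isOfFinAddOrder_iff_nsmul_eq_zero]
  rintro ⟨n, hn, hnx⟩
  exact hc.nsmul_neg hx hn.ne' (hnx ▸ hc.refl 0)

theorem Compatible.zsmul_neg (hc : Compatible r) {x : G} (hx : ¬ 0 ≾ x) {n : ℤ} (hn : 0 < n) :
    ¬ 0 ≾ n • x := by
  lift n to ℕ using hn.le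
  simpa only [natCast_zsmul] using hc.nsmul_neg hx (by exact_mod_cast hn.ne')

theorem Compatible.otype_zero (hc : Compatible r) : OType r (0 : G) :=
  ⟨fun _ h₁ h₂ => hc.eq_zero h₁ h₂, fun _ => rfl⟩

theorem OType.not_equiv_neg {g : G} (hg : OType r g) (hg0 : g ≠ 0) : ¬ g ∼ -g := by
  intro h
  have hneg : -g = g := hg.1 (-g) h.2 h.1
  have : -g + g = 0 := neg_add_cancel g
  rw [hneg] at this
  exact hg0 (hg.2 this)

theorem Compatible.otype_neg (hc : Compatible r) {g : G} (hg : OType r g) : OType r (-g) := by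
  refine ⟨fun x hx₁ hx₂ => ?_, fun h => ?_⟩
  · rcases eq_or_ne g 0 with rfl | hg0
    · simpa using hc.eq_zero (by simpa using hx₁) (by simpa using hx₂)
    · have h := hc.equiv_add_right ⟨hx₁, hx₂⟩ (mt And.symm (hg.not_equiv_neg hg0))
      rw [neg_add_cancel] at h
      exact eq_neg_of_add_eq_zero_left (hc.eq_zero h.1 h.2)
  · rw [hg.2 (neg_eq_zero.mp (by rwa [neg_add])), neg_zero]

theorem Compatible.neg_nonpos_of_nonneg (hc : Compatible r) {g : G} (hg : OType r g)
    (h : 0 ≾ g) : -g ≾ 0 := by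
  rcases eq_or_ne g 0 with rfl | hg0
  · simpa using hc.refl 0
  · simpa using hc.add_right h (hg.not_equiv_neg hg0)

theorem Compatible.neg_neg_of_pos (hc : Compatible r) {g : G} (hg : OType r g)
    (h : ¬ g ≾ 0) : ¬ 0 ≾ -g := fun h' =>
  h (by rw [neg_eq_zero.mp (hc.eq_zero (hc.neg_nonpos_of_nonneg hg (hc.le_of_not_ge h)) h')]
        exact hc.refl 0)

theorem Compatible.add_self_pos (hc : Compatible r) {g : G} (hg : OType r g) (h : ¬ g ≾ 0) :
    ¬ g + g ≾ 0 := by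
  simpa using hc.neg_pos_of_neg (hc.add_neg (hc.neg_neg_of_pos hg h) (hc.neg_neg_of_pos hg h))

theorem Compatible.not_isOfFinAddOrder (hc : Compatible r) {g : G} (hg : OType r g)
    (hg0 : g ≠ 0) : ¬ IsOfFinAddOrder g := by
  rcases hc.trichotomy g with h | h | h
  · exact absurd h hg0
  · rw [← isOfFinAddOrder_neg_iff]
    exact hc.not_isOfFinAddOrder_of_neg (hc.neg_neg_of_pos hg h)
  · exact hc.not_isOfFinAddOrder_of_neg h

theorem Compatible.zsmul_ne_zero (hc : Compatible r) {g : G} (hg : OType r g) (hg0 : g ≠ 0)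
    {n : ℤ} (hn : n ≠ 0) : n • g ≠ 0 :=
  fun h => hc.not_isOfFinAddOrder hg hg0 (isOfFinAddOrder_iff_zsmul_eq_zero.mpr ⟨n, hn, h⟩)

theorem Compatible.pos_iff_of_zsmul_pos (hc : Compatible r) {g : G} (hg : OType r g) {n : ℤ}
    (hn : ¬ n • g ≾ 0) : 0 < n ↔ ¬ g ≾ 0 := by
  rcases hc.trichotomy g with rfl | hgpos | hgneg
  · exact absurd (by simpa using hc.refl 0) hn
  · refine iff_of_true ?_ hgpos
    by_contra! hn₀
    rcases hn₀.lt_or_eq with hlt | rfl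
    · refine hn (hc.le_of_not_ge ?_)
      simpa using hc.zsmul_neg (hc.neg_neg_of_pos hg hgpos) (neg_pos.2 hlt)
    · exact hn (by simpa using hc.refl 0)
  · exact iff_of_false (fun hpos => hn (hc.le_of_not_ge (hc.zsmul_neg hgneg hpos)))
      (not_not.2 (hc.le_of_not_ge hgneg))

theorem Compatible.otype_nsmul_of_neg (hc : Compatible r) {g : G} (hg : OType r g)
    (hgneg : ¬ 0 ≾ g) : ∀ n : ℕ, OType r (n • g)
  | 0 => by simpa using hc.otype_zero
  | n + 1 => by
    have hpos : ¬ 0 ≾ (n + 1) • g := hc.nsmul_neg hgneg n.succ_ne_zero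
    refine ⟨fun x hx₁ hx₂ => ?_, fun h => absurd (h ▸ hc.refl 0) (hc.add_neg hpos hpos)⟩
    have hfar : ¬ (n + 1) • g ∼ -g := fun h =>
      hc.neg_pos_of_neg hgneg (hc.trans h.2 (hc.le_of_not_ge hpos))
    have h := hc.equiv_add_right ⟨hx₁, hx₂⟩ hfar
    rw [succ_nsmul, add_neg_cancel_right] at h
    rw [succ_nsmul, ← (hc.otype_nsmul_of_neg hg hgneg n).1 _ h.1 h.2, neg_add_cancel_right]

theorem Compatible.otype_zsmul (hc : Compatible r) {g : G} (hg : OType r g) (n : ℤ) :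
    OType r (n • g) := by
  have hnsmul : ∀ k : ℕ, OType r (k • g) := by
    rcases hc.trichotomy g with rfl | hgpos | hgneg
    · intro k
      simpa using hc.otype_zero
    · intro k
      simpa using hc.otype_neg
        (hc.otype_nsmul_of_neg (hc.otype_neg hg) (hc.neg_neg_of_pos hg hgpos) k)
    · exact hc.otype_nsmul_of_neg hg hgneg
  obtain ⟨k, rfl | rfl⟩ := Int.eq_nat_or_neg n
  · simpa only [natCast_zsmul] using hnsmul k
  · simpa only [neg_zsmul, natCast_zsmul] using hc.otype_neg (hnsmul k)

theorem Compatible.add_right_self (hc : Compatible r) {x y : G} (hxy : x ≾ y)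
    (hy : OType r y) : x + y ≾ y + y := by
  by_contra hlt
  by_cases hbad : x + y ∼ -y
  · have hxy' : x + y = -y := (hc.otype_neg hy).1 _ hbad.1 hbad.2
    rcases hc.trichotomy y with rfl | hypos | hyneg
    · exact hlt (by simpa using hxy)
    · exact hlt (hxy' ▸ hc.trans (hc.neg_nonpos_of_nonneg hy (hc.le_of_not_ge hypos))
        (hc.le_of_not_ge (hc.add_self_pos hy hypos)))
    · have hx : x = -y + -y := by rw [eq_sub_of_add_eq hxy', sub_eq_add_neg]
      have hxpos : ¬ x ≾ 0 := hx ▸ hc.add_self_pos (hc.otype_neg hy) (hc.neg_pos_of_neg hyneg)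
      exact hxpos (hc.trans hxy (hc.le_of_not_ge hyneg))
  · have hyx : y ≾ x := by simpa using hc.add_right (hc.le_of_not_ge hlt) hbad
    exact hlt (by rw [hy.1 x hxy hyx]; exact hc.refl _)

theorem Compatible.add_right_of_otype (hc : Compatible r) {x y z : G} (hxy : x ≾ y)
    (hy : OType r y) (hz : OType r z) : x + z ≾ y + z := by
  by_cases hyz : y ∼ z
  · rw [← hz.1 y hyz.1 hyz.2]
    exact hc.add_right_self hxy hy
  · exact hc.add_right hxy hyz

theorem Compatible.add_le_add (hc : Compatible r) {x y x' y' : G} (h : x ≾ y) (h' : x' ≾ y')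
    (hy : OType r y) (hx' : OType r x') (hy' : OType r y') : x + x' ≾ y + y' :=
  hc.trans (hc.add_right_of_otype h hy hx')
    (by simpa only [add_comm y] using hc.add_right_of_otype h' hy' hy)

theorem Compatible.zsmul_le_zsmul (hc : Compatible r) {u v : G} (h : u ≾ v) (hu : OType r u)
    (hv : OType r v) {k : ℤ} (hk : 0 ≤ k) : k • u ≾ k • v := by
  lift k to ℕ using hk
  induction k with
  | zero => simpa using hc.refl 0
  | succ k ih =>
    simpa only [Nat.cast_succ, add_zsmul, one_zsmul] using
      hc.add_le_add ih h (hc.otype_zsmul hv k) hu hv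

theorem Preqo.neg_left {g h : G} : Preqo r g h → Preqo r (-g) h
  | ⟨n, m, hn, hm, h₀, h₁⟩ => ⟨-n, m, neg_ne_zero.2 hn, hm, by simpa using h₀, by simpa using h₁⟩

theorem Preqo.neg_right {g h : G} : Preqo r g h → Preqo r g (-h)
  | ⟨n, m, hn, hm, h₀, h₁⟩ => ⟨n, -m, hn, neg_ne_zero.2 hm, h₀, by simpa using h₁⟩

theorem Compatible.preqo_refl (hc : Compatible r) (g : G) : Preqo r g g := by
  rcases hc.total 0 g with h | h
  · exact ⟨1, 1, one_ne_zero, one_ne_zero, by simpa using h, hc.refl _⟩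
  · exact ⟨-1, -1, by norm_num, by norm_num, by simpa using hc.neg_nonneg_of_nonpos h,
      hc.refl _⟩

theorem Compatible.eq_zero_of_preqo_zero (hc : Compatible r) {g : G} (hg : OType r g)
    (h : Preqo r g 0) : g = 0 := by
  obtain ⟨n, m, hn, -, h₀, h₁⟩ := h
  by_contra hg0
  exact hc.zsmul_ne_zero hg hg0 hn (hc.eq_zero (by simpa using h₁) h₀)

theorem Compatible.preqo_trans (hc : Compatible r) {f g h : G} (hf : OType r f)
    (hg : OType r g) (hh : OType r h) : Preqo r f g → Preqo r g h → Preqo r f h := by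
  rintro ⟨n₁, m₁, hn₁, hm₁, hf₀, hfg⟩ ⟨n₂, m₂, hn₂, hm₂, hg₀, hgh⟩
  rcases eq_or_ne f 0 with rfl | hf0
  · exact ⟨1, m₂, one_ne_zero, hm₂, by simpa using hc.refl 0,
      by simpa using hc.trans hg₀ hgh⟩
  have hfpos : ¬ n₁ • f ≾ 0 :=
    hc.pos_of_nonneg_of_ne_zero hf₀ (hc.zsmul_ne_zero hf hf0 hn₁)
  have hm₁g : ¬ m₁ • g ≾ 0 := fun h => hfpos (hc.trans hfg h)
  have hg0 : g ≠ 0 := by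
    rintro rfl
    exact hm₁g (by simpa using hc.refl 0)
  have hn₂g : ¬ n₂ • g ≾ 0 :=
    hc.pos_of_nonneg_of_ne_zero hg₀ (hc.zsmul_ne_zero hg hg0 hn₂)
  have hsign : 0 < m₁ ↔ 0 < n₂ :=
    (hc.pos_iff_of_zsmul_pos hg hm₁g).trans (hc.pos_iff_of_zsmul_pos hg hn₂g).symm
  have hmid : |n₂| * m₁ = |m₁| * n₂ := by
    rcases hm₁.lt_or_gt with h | h
    · have h' : n₂ < 0 := lt_of_not_ge fun h' => h.not_gt (hsign.2 (h'.lt_of_ne' hn₂))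
      rw [abs_of_neg h, abs_of_neg h']
      ring
    · rw [abs_of_pos h, abs_of_pos (hsign.1 h), mul_comm]
  refine ⟨|n₂| * n₁, |m₁| * m₂, mul_ne_zero (abs_ne_zero.2 hn₂) hn₁,
    mul_ne_zero (abs_ne_zero.2 hm₁) hm₂, ?_, ?_⟩
  · simpa [mul_smul] using
      hc.zsmul_le_zsmul hf₀ hc.otype_zero (hc.otype_zsmul hf n₁) (abs_nonneg n₂)
  · have h₁ : (|n₂| * n₁) • f ≾ (|n₂| * m₁) • g := by
      simpa only [mul_smul] using hc.zsmul_le_zsmul hfg (hc.otype_zsmul hf n₁)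
        (hc.otype_zsmul hg m₁) (abs_nonneg n₂)
    have h₂ : (|m₁| * n₂) • g ≾ (|m₁| * m₂) • h := by
      simpa only [mul_smul] using hc.zsmul_le_zsmul hgh (hc.otype_zsmul hg n₂)
        (hc.otype_zsmul hh m₂) (abs_nonneg m₁)
    exact hc.trans h₁ (hmid ▸ h₂)

theorem Compatible.preqo_add_of_preqo (hc : Compatible r) {g h : G} (hg : OType r g)
    (hh : OType r h) (hgh : Preqo r g h) : Preqo r (g + h) h := by
  obtain ⟨n, m, hn, hm, h₀, h₁⟩ := hgh
  have hup : n • (g + h) ≾ (m + n) • h := by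
    simpa only [smul_add, add_zsmul] using
      hc.add_right_of_otype h₁ (hc.otype_zsmul hh m) (hc.otype_zsmul hh n)
  by_cases hs : 0 ≾ n • (g + h)
  · by_cases hmn : m + n = 0
    · have hs0 : n • (g + h) = 0 := hc.eq_zero (by simpa [hmn] using hup) hs
      exact ⟨n, m, hn, hm, hs, by rw [hs0]; exact hc.trans h₀ h₁⟩
    · exact ⟨n, m + n, hn, hmn, hs, hup⟩
  · refine ⟨-n, -n, neg_ne_zero.2 hn, neg_ne_zero.2 hn,
      by rw [neg_zsmul]; exact hc.neg_nonneg_of_nonpos (hc.le_of_not_ge hs), ?_⟩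
    have hng : (-n) • g ≾ 0 := by
      simpa using hc.neg_nonpos_of_nonneg (hc.otype_zsmul hg n) h₀
    simpa [smul_add] using hc.add_right_of_otype hng hc.otype_zero (hc.otype_zsmul hh (-n))

end

/-- in a compatible q.o.a.g, the relation
`g ≼ h ↔ ∃ n m ≠ 0, 0 ≾ n•g ≾ m•h` restricted to the subgroup `G^o` of
o-type elements is a valuational quasi-order: reflexive, transitive, with `0`
strictly maximal, `g ≼ -g ≼ g`, and the ultrametric inequality
`g ≼ h → g + h ≼ h`. -/
theorem preqo_valuational_on_otype (r : G → G → Prop) (hc : Compatible r) :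
    (∀ g : G, OType r g → Preqo r g g) ∧
    (∀ f g h : G, OType r f → OType r g → OType r h →
      Preqo r f g → Preqo r g h → Preqo r f h) ∧
    (∀ g : G, OType r g → Preqo r g 0 → g = 0) ∧
    (∀ g : G, OType r g → (Preqo r g (-g) ∧ Preqo r (-g) g)) ∧
    (∀ g h : G, OType r g → OType r h → Preqo r g h → Preqo r (g + h) h) :=
  ⟨fun g _ => hc.preqo_refl g,
    fun _ _ _ hf hg hh => hc.preqo_trans hf hg hh,
    fun _ hg => hc.eq_zero_of_preqo_zero hg,
    fun g _ => ⟨(hc.preqo_refl g).neg_right, (hc.preqo_refl g).neg_left⟩,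
    fun _ _ hg hh => hc.preqo_add_of_preqo hg hh⟩
end

section
/- Let (G,≾) be a compatible quasi-ordered abelian group, G^o its subgroup of o-type elements and G^v = G \ G^o. Define the ternary relation C on G by: C(x,y,z) ⇔ (x ≠ y ∧ y = z) ∨ (x − z ∈ G^v ∧ y − z ≺ x − z) ∨ (y − z ∈ G^o ∧ x − z ∈ G^o ∧ 0 ≺ x − y ∧ 0 ≺ x − z). Then C is a C-relation on G, i.e. it satisfies (C₁) C(x,y,z) → C(x,z,y), (C₂) C(x,y,z) → ¬C(y,x,z), (C₃) C(x,y,z) → C(w,y,z) ∨ C(x,w,z), (C₄) x ≠ y → C(x,y,y); C is compatible with addition, i.e. C(x,y,z) implies C(x+u, y+u, z+u) for all u ∈ G; and ≾ is the unique compatible total quasi-order on G inducing C by this formula. -/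
universe u

variable {G : Type u} [AddCommGroup G]

/-- `x ≺ y`: strict part of the quasi-order. -/
def SLt (r : G → G → Prop) (x y : G) : Prop := r x y ∧ ¬ r y x

/-- The ternary relation induced by a compatible quasi-order:
`C(x,y,z) ↔ (x ≠ y ∧ y = z) ∨ (x - z ∈ G^v ∧ y - z ≺ x - z) ∨
(y - z ∈ G^o ∧ x - z ∈ G^o ∧ 0 ≺ x - y ∧ 0 ≺ x - z)`. -/
def IndC (r : G → G → Prop) (x y z : G) : Prop :=
  (x ≠ y ∧ y = z) ∨
  (¬ OType r (x - z) ∧ SLt r (y - z) (x - z)) ∨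
  (OType r (y - z) ∧ OType r (x - z) ∧ SLt r 0 (x - y) ∧ SLt r 0 (x - z))

namespace QOHelp

variable {r : G → G → Prop}

lemma rfl' (hc : Compatible r) (x : G) : r x x := hc.1.1 x
lemma tr (hc : Compatible r) {x y z : G} (h1 : r x y) (h2 : r y z) : r x z :=
  hc.1.2.1 x y z h1 h2
lemma tot (hc : Compatible r) (x y : G) : r x y ∨ r y x := hc.1.2.2 x y
lemma q1 (hc : Compatible r) {x : G} (h1 : r x 0) (h2 : r 0 x) : x = 0 := hc.2.1 x h1 h2
lemma q2 (hc : Compatible r) {x y : G} (h : r x y) (z : G) (hyz : ¬(r y z ∧ r z y)) :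
    r (x + z) (y + z) := hc.2.2 x y z h hyz

lemma addz {a b : G} (h : a + b = 0) : b = -a := by
  have h2 : b = 0 - a := by rw [← h]; abel
  simpa using h2

lemma oty_zero (hc : Compatible r) : OType r (0 : G) :=
  ⟨fun _ h1 h2 => q1 hc h1 h2, fun _ => rfl⟩

lemma not_oty_cases {a : G} (h : ¬ OType r a) :
    (∃ k, r k a ∧ r a k ∧ k ≠ a) ∨ (a + a = 0 ∧ a ≠ 0) := by
  by_contra hcon
  push_neg at hcon
  exact h ⟨fun k h1 h2 => hcon.1 k h1 h2, hcon.2⟩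

lemma trich (hc : Compatible r) {x : G} (hx : x ≠ 0) : SLt r 0 x ∨ SLt r x 0 := by
  by_cases h : r 0 x
  · exact Or.inl ⟨h, fun u => hx (q1 hc u h)⟩
  · exact Or.inr ⟨(tot hc 0 x).resolve_left h, h⟩

lemma slt_zero_neg (hc : Compatible r) {x : G} (hx : SLt r x 0) : SLt r 0 (-x) := by
  have hx0 : x ≠ 0 := fun h => hx.2 (by rw [h]; exact rfl' hc 0)
  have cond : ¬(r 0 (-x) ∧ r (-x) 0) := by
    rintro ⟨u1, u2⟩
    exact hx0 (neg_eq_zero.mp (q1 hc u2 u1))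
  have w := q2 hc hx.1 (-x) cond
  rw [show x + -x = (0:G) by abel, show (0:G) + -x = -x by abel] at w
  exact ⟨w, fun u => hx0 (neg_eq_zero.mp (q1 hc u w))⟩

lemma oty_of_slt_zero (hc : Compatible r) {x : G} (hx : SLt r x 0) : OType r x := by
  have p := slt_zero_neg hc hx
  have cond : ¬(r x (-x) ∧ r (-x) x) := by
    rintro ⟨_, u2⟩
    exact hx.2 (tr hc p.1 u2)
  constructor
  · intro k h1 h2
    have cond2 : ¬(r k (-x) ∧ r (-x) k) := by
      rintro ⟨_, u2⟩
      exact hx.2 (tr hc p.1 (tr hc u2 h1))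
    have w1 := q2 hc h1 (-x) cond
    have w2 := q2 hc h2 (-x) cond2
    rw [show x + -x = (0:G) by abel] at w1 w2
    have h0 := q1 hc w1 w2
    exact add_neg_eq_zero.mp h0
  · intro h2
    have hEq : -x = x := (addz h2).symm
    rw [hEq] at p
    exact absurd p.1 hx.2

lemma not_oty_iff (hc : Compatible r) {x : G} :
    ¬OType r x ↔ (x ≠ 0 ∧ r x (-x) ∧ r (-x) x) := by
  constructor
  · intro h
    have hx0 : x ≠ 0 := fun h0 => h (by rw [h0]; exact oty_zero hc)
    refine ⟨hx0, ?_⟩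
    rcases not_oty_cases h with ⟨k, h1, h2, hne⟩ | ⟨h2a, _⟩
    · by_contra hsim
      have cond2 : ¬(r k (-x) ∧ r (-x) k) := by
        rintro ⟨u1, u2⟩
        exact hsim ⟨tr hc h2 u1, tr hc u2 h1⟩
      have w1 := q2 hc h1 (-x) hsim
      have w2 := q2 hc h2 (-x) cond2
      rw [show x + -x = (0:G) by abel] at w1 w2
      exact hne (add_neg_eq_zero.mp (q1 hc w1 w2))
    · have hEq : -x = x := (addz h2a).symm
      rw [hEq]
      exact ⟨rfl' hc x, rfl' hc x⟩
  · rintro ⟨hx0, h1, h2⟩ hox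
    have hE := hox.1 (-x) h2 h1
    have h2' : x + x = 0 := by nth_rewrite 1 [← hE]; exact neg_add_cancel x
    exact hx0 (hox.2 h2')

lemma oty_neg (hc : Compatible r) {x : G} (h : OType r x) : OType r (-x) := by
  by_contra hn
  have t := (not_oty_iff hc).mp hn
  rw [neg_neg] at t
  exact (not_oty_iff hc).mpr ⟨fun h0 => t.1 (by rw [h0, neg_zero]), t.2.2, t.2.1⟩ h

lemma not_oty_neg (hc : Compatible r) {x : G} (h : ¬OType r x) : ¬OType r (-x) :=
  fun h2 => h (by have := oty_neg hc h2; rwa [neg_neg] at this)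

lemma pos_of_not_oty (hc : Compatible r) {x : G} (hx : ¬OType r x) : SLt r 0 x := by
  have hx0 : x ≠ 0 := fun h => hx (by rw [h]; exact oty_zero hc)
  rcases trich hc hx0 with h | h
  · exact h
  · exact absurd (oty_of_slt_zero hc h) hx

lemma neg_slt_zero (hc : Compatible r) {x : G} (hox : OType r x) (hp : SLt r 0 x) :
    SLt r (-x) 0 := by
  have hx0 : x ≠ 0 := fun h => hp.2 (by rw [h]; exact rfl' hc 0)
  have cond : ¬(r x (-x) ∧ r (-x) x) := by
    rintro ⟨u1, u2⟩
    have hE := hox.1 (-x) u2 u1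
    exact hx0 (hox.2 (by nth_rewrite 1 [← hE]; exact neg_add_cancel x))
  have w := q2 hc hp.1 (-x) cond
  rw [show (0:G) + -x = -x by abel, show x + -x = (0:G) by abel] at w
  exact ⟨w, fun u => hx0 (neg_eq_zero.mp (q1 hc w u))⟩

end QOHelp

namespace QOHelp

variable {r : G → G → Prop}

lemma oty_slt (hc : Compatible r) {d a : G} (hd : OType r d) (ha : ¬OType r a) :
    SLt r d a := by
  have pa : SLt r 0 a := pos_of_not_oty hc ha
  by_cases hd0 : r d 0
  · exact ⟨tr hc hd0 pa.1, fun u => pa.2 (tr hc u hd0)⟩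
  · have pd : SLt r 0 d := ⟨(tot hc d 0).resolve_left hd0, hd0⟩
    have hdne : d ≠ 0 := fun h => hd0 (by rw [h]; exact rfl' hc 0)
    by_contra hnda
    have had : r a d := by
      by_contra hno
      exact hnda ⟨(tot hc a d).resolve_left hno, hno⟩
    have cond1 : ¬(r d (-d) ∧ r (-d) d) := by
      rintro ⟨u1, u2⟩
      have hE := hd.1 (-d) u2 u1
      exact hdne (hd.2 (by nth_rewrite 1 [← hE]; exact neg_add_cancel d))
    have sub1 : r (a - d) 0 := by
      have w := q2 hc had (-d) cond1
      rwa [show a + -d = a - d by rw [sub_eq_add_neg], show d + -d = (0:G) by abel] at w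
    have haz : a - d ≠ 0 := by
      intro h0
      exact ha (by rw [sub_eq_zero.mp h0]; exact hd)
    have sub2 : SLt r (a - d) 0 := ⟨sub1, fun u => haz (q1 hc sub1 u)⟩
    have nd0 : SLt r (-d) 0 := neg_slt_zero hc hd pd
    have cond2 : ¬(r a (-d) ∧ r (-d) a) := by
      rintro ⟨u1, _⟩
      exact pa.2 (tr hc u1 nd0.1)
    rcases not_oty_cases ha with ⟨k, h1, h2, hne⟩ | ⟨h2a, _⟩
    · have cond3 : ¬(r k (-d) ∧ r (-d) k) := by
        rintro ⟨u1, _⟩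
        exact pa.2 (tr hc (tr hc h2 u1) nd0.1)
      have w1 : r (k - d) (a - d) := by
        have w := q2 hc h1 (-d) cond2
        rwa [show k + -d = k - d by rw [sub_eq_add_neg],
          show a + -d = a - d by rw [sub_eq_add_neg]] at w
      have w2 : r (a - d) (k - d) := by
        have w := q2 hc h2 (-d) cond3
        rwa [show k + -d = k - d by rw [sub_eq_add_neg],
          show a + -d = a - d by rw [sub_eq_add_neg]] at w
      have hOad : OType r (a - d) := oty_of_slt_zero hc sub2
      have hE : k - d = a - d := hOad.1 (k - d) w1 w2
      exact hne (sub_left_inj.mp hE)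
    · have hpe : SLt r 0 (d - a) := by
        have w := slt_zero_neg hc sub2
        rwa [neg_sub] at w
      have hOe : OType r (d - a) := by
        have w := oty_neg hc (oty_of_slt_zero hc sub2)
        rwa [neg_sub] at w
      have hene : d - a ≠ 0 := by
        intro h0
        exact ha (by rw [← sub_eq_zero.mp h0]; exact hd)
      by_cases hde : r d (d - a)
      · by_cases hed : r (d - a) d
        · have hE : d - a = d := hd.1 (d - a) hed hde
          have ha0 : a = 0 := by
            have := sub_eq_self.mp hE
            exact this
          exact pa.2 (by rw [ha0]; exact rfl' hc 0)
        · have conde : ¬(r (d-a) (-(d-a)) ∧ r (-(d-a)) (d-a)) := by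
            rintro ⟨u1, u2⟩
            have hh := hOe.1 _ u2 u1
            exact hene (hOe.2 (by nth_rewrite 1 [← hh]; exact neg_add_cancel _))
          have w := q2 hc hde (-(d-a)) conde
          rw [show d + -(d-a) = a by abel, show (d-a) + -(d-a) = (0:G) by abel] at w
          exact pa.2 w
      · have hed : r (d - a) d := (tot hc d (d-a)).resolve_left hde
        have w := q2 hc hed (-d) cond1
        rw [show (d - a) + -d = -a by abel, show d + -d = (0:G) by abel] at w
        have hEq : -a = a := (addz h2a).symm
        rw [hEq] at w
        exact pa.2 w

lemma oty_add (hc : Compatible r) {a b : G} (hoa : OType r a) (hob : OType r b) :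
    OType r (a + b) := by
  by_contra hs
  have ns := (not_oty_iff hc).mp hs
  have hsa : SLt r a (a+b) := oty_slt hc hoa hs
  have hsb : SLt r b (a+b) := oty_slt hc hob hs
  have hsnb : SLt r (-b) (a+b) := oty_slt hc (oty_neg hc hob) hs
  have cond : ¬(r (-(a+b)) a ∧ r a (-(a+b))) := by
    rintro ⟨u1, _⟩
    exact hsa.2 (tr hc ns.2.1 u1)
  have w1 := q2 hc ns.2.1 a cond
  rw [show -(a+b) + a = -b by abel] at w1
  have cond2 : ¬(r (a+b) a ∧ r a (a+b)) := fun h => hsa.2 h.1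
  have w2 := q2 hc hsb.1 a cond2
  rw [show b + a = a + b by abel] at w2
  exact hsnb.2 (tr hc w2 w1)

lemma pos_add (hc : Compatible r) {a b : G} (hoa : OType r a) (hpa : SLt r 0 a)
    (hpb : SLt r 0 b) : SLt r 0 (a + b) := by
  have hna : SLt r (-a) 0 := neg_slt_zero hc hoa hpa
  have hs0 : a + b ≠ 0 := by
    intro h0
    rw [addz h0] at hpb
    exact hpb.2 hna.1
  by_cases hsz : r (a+b) 0
  · exfalso
    have cond : ¬(r 0 (-a) ∧ r (-a) 0) := by
      rintro ⟨u1, u2⟩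
      have h0 := neg_eq_zero.mp (q1 hc u2 u1)
      exact hpa.2 (by rw [h0]; exact rfl' hc 0)
    have w := q2 hc hsz (-a) cond
    rw [show (a+b) + -a = b by abel, show (0:G) + -a = -a by abel] at w
    exact hpb.2 (tr hc w hna.1)
  · exact ⟨(tot hc 0 (a+b)).resolve_right hsz, hsz⟩

lemma habs1 (hc : Compatible r) {a c : G} (ha : ¬OType r a) (hns : ¬OType r (a+c))
    (hoc : OType r c) (hc0 : c ≠ 0) (hlt : SLt r a (a+c)) : False := by
  have na := (not_oty_iff hc).mp ha
  have ns := (not_oty_iff hc).mp hns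
  have st1 : r a (-(a+c)) := tr hc hlt.1 ns.2.1
  have cond1 : ¬(r (-(a+c)) a ∧ r a (-(a+c))) := by
    rintro ⟨u1, _⟩
    exact hlt.2 (tr hc ns.2.1 u1)
  have w1 := q2 hc st1 a cond1
  rw [show -(a+c) + a = -c by abel] at w1
  have cond2 : ¬(r (-c) c ∧ r c (-c)) := by
    rintro ⟨u1, u2⟩
    have hE := hoc.1 (-c) u1 u2
    exact hc0 (hoc.2 (by nth_rewrite 1 [← hE]; exact neg_add_cancel c))
  have w2 := q2 hc w1 c cond2
  rw [show a + a + c = a + (a+c) by abel, show -c + c = (0:G) by abel] at w2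
  have cond3 : ¬(r 0 (-a) ∧ r (-a) 0) := by
    rintro ⟨u1, u2⟩
    exact na.1 (neg_eq_zero.mp (q1 hc u2 u1))
  have w3 := q2 hc w2 (-a) cond3
  rw [show a + (a+c) + -a = a + c by abel, show (0:G) + -a = -a by abel] at w3
  exact hlt.2 (tr hc w3 na.2.2)

lemma vadd_o (hc : Compatible r) {x y : G} (hx : ¬OType r x) (hy : OType r y) :
    r (x + y) x ∧ r x (x + y) ∧ ¬OType r (x + y) := by
  by_cases hy0 : y = 0
  · subst hy0; rw [add_zero]; exact ⟨rfl' hc x, rfl' hc x, hx⟩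
  have hns : ¬OType r (x + y) := by
    intro hos
    have w := oty_add hc hos (oty_neg hc hy)
    rw [show x + y + -y = x by abel] at w
    exact hx w
  refine ⟨?_, ?_, hns⟩
  · by_contra hn
    exact habs1 hc hx hns hy hy0 ⟨(tot hc x (x+y)).resolve_right hn, hn⟩
  · by_contra hn
    have hlt : SLt r (x+y) x := ⟨(tot hc (x+y) x).resolve_right hn, hn⟩
    have hx' : ¬OType r ((x+y) + -y) := by
      rw [show (x+y) + -y = x by abel]; exact hx
    have hlt' : SLt r (x+y) ((x+y) + -y) := by
      rw [show (x+y) + -y = x by abel]; exact hlt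
    exact habs1 hc hns hx' (oty_neg hc hy) (neg_ne_zero.mpr hy0) hlt'

lemma vne (hc : Compatible r) {a c : G} (ha : ¬OType r a) (hca : SLt r c a) :
    ¬OType r (a + c) := by
  intro hos
  by_cases hoc : OType r c
  · have w := oty_add hc hos (oty_neg hc hoc)
    rw [show a + c + -c = a by abel] at w
    exact ha w
  · have nc := (not_oty_iff hc).mp hoc
    have h1 := (vadd_o hc (not_oty_neg hc hoc) hos).1
    rw [show -c + (a+c) = a by abel] at h1
    exact hca.2 (tr hc h1 nc.2.2)

end QOHelp

namespace QOHelp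

variable {r : G → G → Prop}

lemma M1 (hc : Compatible r) {a c : G} (ha : ¬OType r a) (hca : SLt r c a) :
    ¬ SLt r a (a + c) := by
  intro hlt
  have hns := vne hc ha hca
  by_cases hoc : OType r c
  · have hc0 : c ≠ 0 := by
      intro h0; rw [h0, add_zero] at hlt; exact hlt.2 (rfl' hc a)
    exact habs1 hc ha hns hoc hc0 hlt
  · have nc := (not_oty_iff hc).mp hoc
    have na := (not_oty_iff hc).mp ha
    have ns := (not_oty_iff hc).mp hns
    have cond : ¬(r (a+c) (-c) ∧ r (-c) (a+c)) := by
      rintro ⟨u1, _⟩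
      exact hca.2 (tr hc (tr hc hlt.1 u1) nc.2.2)
    have hmas : r (-a) (a+c) := tr hc na.2.2 hlt.1
    have w := q2 hc hmas (-c) cond
    rw [show -a + -c = -(a+c) by abel, show (a+c) + -c = a by abel] at w
    exact hlt.2 (tr hc ns.2.1 w)

lemma kernel (hc : Compatible r) {a b s : G} (heq : a = s + b) (ha : ¬OType r a)
    (hb : ¬OType r b) (hs : ¬OType r s) (hsb : r s b) (hbs : r b s)
    (hba : SLt r b a) : False := by
  subst heq
  have na := (not_oty_iff hc).mp ha
  have nb := (not_oty_iff hc).mp hb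
  have ns := (not_oty_iff hc).mp hs
  have pb : SLt r 0 b := pos_of_not_oty hc hb
  have ps : SLt r 0 s := pos_of_not_oty hc hs
  have hnab : ¬ r (s+b) b := hba.2
  have hsa : SLt r s (s+b) := ⟨tr hc hsb hba.1, fun u => hnab (tr hc u hsb)⟩
  have step1 : r (s+b) ((s+b)+b) := by
    have w := q2 hc hsa.1 b (fun u => hnab u.1)
    exact w
  have step1' : r (s+b) ((s+b)+s) := by
    have w := q2 hc hba.1 s (fun u => hsa.2 u.1)
    rwa [show b + s = s + b by abel] at w
  have htne : (s+b)+b ≠ 0 := by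
    intro h0
    have hbeq : b = -(s+b) := addz h0
    refine hnab ?_
    nth_rewrite 2 [hbeq]
    exact na.2.1
  have ht'ne : (s+b)+s ≠ 0 := by
    intro h0
    have hseq : s = -(s+b) := addz h0
    have w : r (s+b) s := by nth_rewrite 2 [hseq]; exact na.2.1
    exact hsa.2 w
  have hnt : ¬OType r ((s+b)+b) := by
    intro hot
    have cond : ¬(r ((s+b)+b) (-((s+b)+b)) ∧ r (-((s+b)+b)) ((s+b)+b)) := by
      rintro ⟨u1, u2⟩
      have hh := hot.1 _ u2 u1
      exact htne (hot.2 (by nth_rewrite 1 [← hh]; exact neg_add_cancel _))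
    have w := q2 hc step1 (-((s+b)+b)) cond
    rw [show (s+b) + -((s+b)+b) = -b by abel,
      show ((s+b)+b) + -((s+b)+b) = (0:G) by abel] at w
    have r0nb : r 0 (-b) := tr hc pb.1 nb.2.1
    have hb0 : b = 0 := neg_eq_zero.mp (q1 hc w r0nb)
    exact pb.2 (by rw [hb0]; exact rfl' hc 0)
  have hnt' : ¬OType r ((s+b)+s) := by
    intro hot
    have cond : ¬(r ((s+b)+s) (-((s+b)+s)) ∧ r (-((s+b)+s)) ((s+b)+s)) := by
      rintro ⟨u1, u2⟩
      have hh := hot.1 _ u2 u1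
      exact ht'ne (hot.2 (by nth_rewrite 1 [← hh]; exact neg_add_cancel _))
    have w := q2 hc step1' (-((s+b)+s)) cond
    rw [show (s+b) + -((s+b)+s) = -s by abel,
      show ((s+b)+s) + -((s+b)+s) = (0:G) by abel] at w
    have r0ns : r 0 (-s) := tr hc ps.1 ns.2.1
    have hs0 : s = 0 := neg_eq_zero.mp (q1 hc w r0ns)
    exact ps.2 (by rw [hs0]; exact rfl' hc 0)
  have nt := (not_oty_iff hc).mp hnt
  have nt' := (not_oty_iff hc).mp hnt'
  have w4 : r s (-((s+b)+b)) := by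
    have cond : ¬(r (-(s+b)) (-b) ∧ r (-b) (-(s+b))) := by
      rintro ⟨u1, _⟩
      exact hnab (tr hc (tr hc na.2.1 u1) nb.2.2)
    have w := q2 hc na.2.1 (-b) cond
    rwa [show (s+b) + -b = s by abel, show -(s+b) + -b = -((s+b)+b) by abel] at w
  have w4' : r b (-((s+b)+s)) := by
    have cond : ¬(r (-(s+b)) (-s) ∧ r (-s) (-(s+b))) := by
      rintro ⟨u1, _⟩
      exact hsa.2 (tr hc (tr hc na.2.1 u1) ns.2.2)
    have w := q2 hc na.2.1 (-s) cond
    rwa [show (s+b) + -s = b by abel, show -(s+b) + -s = -((s+b)+s) by abel] at w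
  have step5 : r ((s+b)+b) (s+b) := by
    by_contra hnta
    have cond : ¬(r (-((s+b)+b)) (s+b) ∧ r (s+b) (-((s+b)+b))) := by
      rintro ⟨u1, _⟩
      exact hnta (tr hc nt.2.1 u1)
    have w := q2 hc w4 (s+b) cond
    rw [show s + (s+b) = (s+b)+s by abel, show -((s+b)+b) + (s+b) = -b by abel] at w
    exact hnab (tr hc (tr hc step1' w) nb.2.2)
  have step5' : r ((s+b)+s) (s+b) := by
    by_contra hnta
    have cond : ¬(r (-((s+b)+s)) (s+b) ∧ r (s+b) (-((s+b)+s))) := by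
      rintro ⟨u1, _⟩
      exact hnta (tr hc nt'.2.1 u1)
    have w := q2 hc w4' (s+b) cond
    rw [show b + (s+b) = (s+b)+b by abel, show -((s+b)+s) + (s+b) = -s by abel] at w
    exact hsa.2 (tr hc (tr hc step1 w) ns.2.2)
  have w6 := q2 hc step5 s (fun u => hsa.2 u.1)
  rw [show ((s+b)+b) + s = (s+b) + (s+b) by abel] at w6
  have step7 : r ((s+b)+(s+b)) (s+b) := tr hc w6 step5'
  have w8 := q2 hc step7 (-b) (fun u => hnab (tr hc u.1 nb.2.2))
  rw [show ((s+b)+(s+b)) + -b = (s+b)+s by abel, show (s+b) + -b = s by abel] at w8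
  exact hsa.2 (tr hc step1' w8)

lemma M2 (hc : Compatible r) {a c : G} (ha : ¬OType r a) (hca : SLt r c a) :
    ¬ SLt r (a + c) a := by
  intro hlt
  have hns := vne hc ha hca
  have na := (not_oty_iff hc).mp ha
  by_cases h1 : r (a+c) (-c)
  · by_cases h2 : r (-c) (a+c)
    · by_cases hoc : OType r c
      · have hco := oty_neg hc hoc
        have hEq : a + c = -c := hco.1 (a+c) h1 h2
        have h0 : a + (c + c) = 0 := by rw [← add_assoc, hEq]; exact neg_add_cancel c
        have h0' : (c + c) + a = 0 := by rw [add_comm]; exact h0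
        have hA : a = -(c+c) := addz h0'
        have hOA : OType r a := by
          rw [hA]; exact oty_neg hc (oty_add hc hoc hoc)
        exact ha hOA
      · have nc := (not_oty_iff hc).mp hoc
        have hslt : SLt r (-c) a :=
          ⟨tr hc nc.2.2 hca.1, fun u => hca.2 (tr hc u nc.2.2)⟩
        exact kernel hc (show a = (a+c) + (-c) by abel) ha (not_oty_neg hc hoc)
          hns h1 h2 hslt
    · have hnoc : ¬OType r (-c) := by
        intro ho
        exact h2 (oty_slt hc ho hns).1
      have hnc : ¬OType r c := fun h => hnoc (oty_neg hc h)
      have nc := (not_oty_iff hc).mp hnc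
      have hslt : SLt r (-c) (-c + (a+c)) := by
        rw [show -c + (a+c) = a by abel]
        exact ⟨tr hc nc.2.2 hca.1, fun u => hca.2 (tr hc u nc.2.2)⟩
      exact M1 hc hnoc ⟨h1, h2⟩ hslt
  · have h2 : r (-c) (a+c) := (tot hc (a+c) (-c)).resolve_left h1
    have hM := M1 hc hns ⟨h2, h1⟩
    rw [show (a+c) + -c = a by abel] at hM
    exact hM hlt

lemma absL (hc : Compatible r) {a c : G} (ha : ¬OType r a) (hca : SLt r c a) :
    r (a + c) a ∧ r a (a + c) ∧ ¬OType r (a + c) := by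
  refine ⟨?_, ?_, vne hc ha hca⟩
  · by_contra hn
    exact M1 hc ha hca ⟨(tot hc a (a+c)).resolve_right hn, hn⟩
  · by_contra hn
    exact M2 hc ha hca ⟨(tot hc (a+c) a).resolve_right hn, hn⟩

lemma neg_small (hc : Compatible r) {a b : G} (hba : SLt r b a) (hna : ¬OType r a) :
    SLt r (-b) a := by
  by_cases hob : OType r b
  · exact oty_slt hc (oty_neg hc hob) hna
  · have nb := (not_oty_iff hc).mp hob
    exact ⟨tr hc nb.2.2 hba.1, fun u => hba.2 (tr hc u nb.2.2)⟩

lemma S3a (hc : Compatible r) {a b : G} (hoa : OType r a) (hob : OType r b)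
    (hab : SLt r a b) : SLt r 0 (b - a) := by
  have hne : a ≠ b := fun h => hab.2 (by rw [h]; exact rfl' hc b)
  by_cases hba : r b (-a) ∧ r (-a) b
  · have hEq : -a = b := hob.1 (-a) hba.2 hba.1
    have hA : a = -b := by rw [← hEq, neg_neg]
    have hbne : b ≠ 0 := by
      intro h0
      rw [h0, neg_zero] at hA
      exact hne (by rw [hA, h0])
    rcases trich hc hbne with hp | hn
    · have w := pos_add hc hob hp hp
      rwa [show b + b = b - a by rw [hA, sub_neg_eq_add]] at w
    · exfalso
      have hpa : SLt r 0 a := by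
        have w := slt_zero_neg hc hn
        rwa [← hA] at w
      exact hn.2 (tr hc hpa.1 hab.1)
  · have w := q2 hc hab.1 (-a) hba
    rw [show a + -a = (0:G) by abel, show b + -a = b - a by rw [sub_eq_add_neg]] at w
    exact ⟨w, fun u => hne ((sub_eq_zero.mp (q1 hc u w)).symm)⟩

end QOHelp

namespace QOHelp

variable {r : G → G → Prop}

def Cc (r : G → G → Prop) (a b : G) : Prop :=
  (a ≠ b ∧ b = 0) ∨
  (¬ OType r a ∧ SLt r b a) ∨
  (OType r b ∧ OType r a ∧ SLt r 0 (a - b) ∧ SLt r 0 a)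

lemma indC_iff {x y z : G} : IndC r x y z ↔ Cc r (x - z) (y - z) := by
  have e1 : (x ≠ y) ↔ (x - z ≠ y - z) := not_congr sub_left_inj.symm
  have e2 : (y = z) ↔ (y - z = 0) := sub_eq_zero.symm
  have e3 : x - y = (x - z) - (y - z) := by abel
  unfold IndC Cc
  rw [e3]
  exact or_congr (and_congr e1 e2) Iff.rfl

lemma cone (hc : Compatible r) {a b : G} (h : Cc r a b) : Cc r (a - b) (-b) := by
  rcases h with ⟨hne, hb⟩ | ⟨hna, hba⟩ | ⟨hob, hoa, hd, hp⟩
  · subst hb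
    refine Or.inl ⟨?_, neg_zero⟩
    simpa using hne
  · have hnb := neg_small hc hba hna
    have habs := absL hc hna hnb
    rw [show a + -b = a - b by rw [sub_eq_add_neg]] at habs
    exact Or.inr (Or.inl ⟨habs.2.2,
      ⟨tr hc hnb.1 habs.2.1, fun u => hnb.2 (tr hc habs.2.1 u)⟩⟩)
  · refine Or.inr (Or.inr ⟨oty_neg hc hob, ?_, ?_, hd⟩)
    · have w := oty_add hc hoa (oty_neg hc hob)
      rwa [← sub_eq_add_neg] at w
    · rw [show a - b - -b = a by abel]
      exact hp

lemma ctwo (hc : Compatible r) {a b : G} (h : Cc r a b) (h' : Cc r b a) : False := by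
  rcases h with ⟨hne, hb⟩ | ⟨hna, hba⟩ | ⟨hob, hoa, hd, hp⟩ <;>
    rcases h' with ⟨hne', ha'⟩ | ⟨hnb', hab'⟩ | ⟨hoa', hob', hd', hp'⟩
  · exact hne (ha'.trans hb.symm)
  · exact hnb' (by rw [hb]; exact oty_zero hc)
  · rw [hb] at hp'
    exact hp'.2 (rfl' hc 0)
  · exact hna (by rw [ha']; exact oty_zero hc)
  · exact hba.2 hab'.1
  · exact hna hoa'
  · rw [ha'] at hp
    exact hp.2 (rfl' hc 0)
  · exact hnb' hob
  · have hOsub : OType r (a - b) := by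
      have w := oty_add hc hoa (oty_neg hc hob)
      rwa [← sub_eq_add_neg] at w
    have w := neg_slt_zero hc hOsub hd
    rw [neg_sub] at w
    exact w.2 hd'.1

lemma cthree (hc : Compatible r) {a b : G} (h : Cc r a b) (d : G) :
    Cc r d b ∨ Cc r a d := by
  rcases h with ⟨hne, hb⟩ | ⟨hna, hba⟩ | ⟨hob, hoa, hd0, hp⟩
  · by_cases hd : d = 0
    · right; subst hb; subst hd; exact Or.inl ⟨hne, rfl⟩
    · left; subst hb; exact Or.inl ⟨hd, rfl⟩
  · by_cases had : r a d
    · left; right; left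
      exact ⟨fun hod => (oty_slt hc hod hna).2 had,
        tr hc hba.1 had, fun u => hba.2 (tr hc had u)⟩
    · right; right; left
      exact ⟨hna, (tot hc a d).resolve_left had, had⟩
  · by_cases hod : OType r d
    · by_cases had : a = d
      · left; right; right
        rw [← had]
        exact ⟨hob, hoa, hd0, hp⟩
      · have hsub : a - d ≠ 0 := sub_ne_zero.mpr had
        rcases trich hc hsub with hpos | hneg
        · right; right; right
          exact ⟨hod, hoa, hpos, hp⟩
        · left; right; right
          have h1 : SLt r 0 (d - a) := by
            have w := slt_zero_neg hc hneg
            rwa [neg_sub] at w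
          have hOda : OType r (d - a) := by
            have w := oty_neg hc (oty_of_slt_zero hc hneg)
            rwa [neg_sub] at w
          refine ⟨hob, ?_, ?_, ?_⟩
          · have w := oty_add hc hOda hoa
            rwa [show d - a + a = d by abel] at w
          · have w := pos_add hc hOda h1 hd0
            rwa [show d - a + (a - b) = d - b by abel] at w
          · have w := pos_add hc hOda h1 hp
            rwa [show d - a + a = d by abel] at w
    · left; right; left
      exact ⟨hod, oty_slt hc hob hod⟩

lemma pos_iff (hc : Compatible r) (t : G) :
    IndC r t (-t) 0 ↔ (OType r t ∧ SLt r 0 t) := by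
  rw [indC_iff]
  simp only [sub_zero]
  constructor
  · rintro (⟨hne, h0⟩ | ⟨hnt, hlt⟩ | ⟨_, hot, _, hp⟩)
    · have ht : t = 0 := neg_eq_zero.mp h0
      exact absurd (by rw [ht, neg_zero]) hne
    · exact absurd ((not_oty_iff hc).mp hnt).2.1 hlt.2
    · exact ⟨hot, hp⟩
  · rintro ⟨hot, hp⟩
    refine Or.inr (Or.inr ⟨oty_neg hc hot, hot, ?_, hp⟩)
    have w := pos_add hc hot hp hp
    rwa [show t + t = t - -t by abel] at w

lemma otype_iff_ind (hc : Compatible r) (x : G) :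
    OType r x ↔ (x = 0 ∨ IndC r x (-x) 0 ∨ IndC r (-x) x 0) := by
  constructor
  · intro hox
    by_cases hx0 : x = 0
    · exact Or.inl hx0
    rcases trich hc hx0 with hp | hn
    · exact Or.inr (Or.inl ((pos_iff hc x).mpr ⟨hox, hp⟩))
    · right; right
      have w := (pos_iff hc (-x)).mpr ⟨oty_neg hc hox, slt_zero_neg hc hn⟩
      rwa [neg_neg] at w
  · rintro (h0 | h1 | h2)
    · rw [h0]; exact oty_zero hc
    · exact ((pos_iff hc x).mp h1).1
    · have h2' : IndC r (-x) (-(-x)) 0 := by rwa [neg_neg]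
      have w := oty_neg hc ((pos_iff hc (-x)).mp h2').1
      rwa [neg_neg] at w

lemma vlt_iff (hc : Compatible r) {g h : G} (hg : ¬OType r g) (hh : ¬OType r h) :
    IndC r g h 0 ↔ SLt r h g := by
  rw [indC_iff]
  simp only [sub_zero]
  constructor
  · rintro (⟨_, h0⟩ | ⟨_, hlt⟩ | ⟨hoh, _, _, _⟩)
    · exact absurd (by rw [h0]; exact oty_zero hc) hh
    · exact hlt
    · exact absurd hoh hh
  · intro hlt
    exact Or.inr (Or.inl ⟨hg, hlt⟩)

end QOHelp

namespace QOHelp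

variable {r : G → G → Prop}

lemma char (hc : Compatible r) (g h : G) : r g h ↔
    ((OType r g ∧ OType r h ∧ (g = h ∨ (OType r (h - g) ∧ SLt r 0 (h - g)))) ∨
      (OType r g ∧ ¬OType r h) ∨
      (¬OType r g ∧ ¬OType r h ∧ ¬ SLt r h g)) := by
  by_cases hog : OType r g <;> by_cases hoh : OType r h
  · constructor
    · intro hr
      by_cases hrh : r h g
      · exact Or.inl ⟨hog, hoh, Or.inl (hoh.1 g hr hrh)⟩
      · refine Or.inl ⟨hog, hoh, Or.inr ⟨?_, S3a hc hog hoh ⟨hr, hrh⟩⟩⟩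
        have w := oty_add hc hoh (oty_neg hc hog)
        rwa [← sub_eq_add_neg] at w
    · rintro (⟨_, _, hcase⟩ | ⟨_, hnh⟩ | ⟨hng, _⟩)
      · rcases hcase with hgh | ⟨hOs, hps⟩
        · rw [hgh]; exact rfl' hc h
        · by_contra hngh
          have hlt : SLt r h g := ⟨(tot hc g h).resolve_left hngh, hngh⟩
          have h2 := S3a hc hoh hog hlt
          have hOs' : OType r (g - h) := by
            have w := oty_add hc hog (oty_neg hc hoh)
            rwa [← sub_eq_add_neg] at w
          have h3 := neg_slt_zero hc hOs' h2
          rw [neg_sub] at h3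
          exact h3.2 hps.1
      · exact absurd hoh hnh
      · exact absurd hog hng
  · exact ⟨fun _ => Or.inr (Or.inl ⟨hog, hoh⟩), fun _ => (oty_slt hc hog hoh).1⟩
  · constructor
    · intro hr
      exact absurd hr (oty_slt hc hoh hog).2
    · rintro (⟨hg, _⟩ | ⟨hg, _⟩ | ⟨_, hnh, _⟩)
      · exact absurd hg hog
      · exact absurd hg hog
      · exact absurd hoh hnh
  · constructor
    · intro hr
      exact Or.inr (Or.inr ⟨hog, hoh, fun hsl => hsl.2 hr⟩)
    · rintro (⟨hg, _⟩ | ⟨hg, _⟩ | ⟨_, _, hnsl⟩)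
      · exact absurd hg hog
      · exact absurd hg hog
      · by_contra hngh
        exact hnsl ⟨(tot hc g h).resolve_left hngh, hngh⟩

lemma char2 (hc : Compatible r) (g h : G) :
    r g h ↔
      (((g = 0 ∨ IndC r g (-g) 0 ∨ IndC r (-g) g 0) ∧
          (h = 0 ∨ IndC r h (-h) 0 ∨ IndC r (-h) h 0) ∧
          (g = h ∨ IndC r (h - g) (g - h) 0)) ∨
        ((g = 0 ∨ IndC r g (-g) 0 ∨ IndC r (-g) g 0) ∧
          ¬(h = 0 ∨ IndC r h (-h) 0 ∨ IndC r (-h) h 0)) ∨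
        (¬(g = 0 ∨ IndC r g (-g) 0 ∨ IndC r (-g) g 0) ∧
          ¬(h = 0 ∨ IndC r h (-h) 0 ∨ IndC r (-h) h 0) ∧
          ¬ IndC r g h 0)) := by
  rw [show g - h = -(h - g) by rw [neg_sub]]
  rw [← otype_iff_ind hc g, ← otype_iff_ind hc h]
  rw [pos_iff hc]
  rw [char hc g h]
  by_cases hog : OType r g <;> by_cases hoh : OType r h
  · simp [hog, hoh]
  · simp [hog, hoh]
  · simp [hog, hoh]
  · rw [vlt_iff hc hog hoh]

end QOHelp


/-- for a compatible q.o.a.g `(G, ≾)`, the induced ternary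
relation `C` is a C-relation (axioms (C₁)–(C₄)), it is compatible with
addition, and `≾` is the unique compatible total quasi-order on `G` inducing
`C` by this formula. -/
theorem induced_C_relation (r : G → G → Prop) (hc : Compatible r) :
    (∀ x y z : G, IndC r x y z → IndC r x z y) ∧
    (∀ x y z : G, IndC r x y z → ¬ IndC r y x z) ∧
    (∀ x y z w : G, IndC r x y z → (IndC r w y z ∨ IndC r x w z)) ∧
    (∀ x y : G, x ≠ y → IndC r x y y) ∧
    (∀ x y z u : G, IndC r x y z → IndC r (x + u) (y + u) (z + u)) ∧
    (∀ r' : G → G → Prop, Compatible r' →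
      (∀ x y z : G, IndC r' x y z ↔ IndC r x y z) →
      ∀ g h : G, r' g h ↔ r g h) := by
  refine ⟨?_, ?_, ?_, ?_, ?_, ?_⟩
  · intro x y z h
    rw [QOHelp.indC_iff] at h ⊢
    have h2 := QOHelp.cone hc h
    rwa [show x - z - (y - z) = x - y by abel, show -(y - z) = z - y by abel] at h2
  · intro x y z h h'
    rw [QOHelp.indC_iff] at h h'
    exact QOHelp.ctwo hc h h'
  · intro x y z w h
    rw [QOHelp.indC_iff] at h
    rw [QOHelp.indC_iff, QOHelp.indC_iff]
    exact QOHelp.cthree hc h (w - z)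
  · intro x y hxy
    exact Or.inl ⟨hxy, rfl⟩
  · intro x y z u h
    rw [QOHelp.indC_iff] at h ⊢
    rwa [show x + u - (z + u) = x - z by abel, show y + u - (z + u) = y - z by abel]
  · intro r' hc' hiff g h
    rw [QOHelp.char2 hc' g h, QOHelp.char2 hc g h]
    simp only [hiff]
end
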